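/- For every J ∈ (0, π/4), the sequence T ↦ −log( (1 + 2·f₂(J)^{2T} + g₂(J,J)·f₂(J)^{4T−8}) / 4 ), defined for natural numbers T ≥ 2, converges to 2·log 2 as T → ∞. (This is the long-time saturation of the long-range stabilizer Rényi entropy L_{B₀} for the partition B₀ when J_o = J_e = J.) -/
import Mathlib


open Filter

noncomputable section

/-- `f_n(J) = cos(2J)^{2n} + sin(2J)^{2n}`. -/
def f (n : ℕ) (J : ℝ) : ℝ := Real.cos (2*J)^(2*n) + Real.sin (2*J)^(2*n)

/-- `g_n(J_o,J_e)`, the end-cap factor in the exact formula for `ζ_n(ρ_AB)`. -/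
def g (n : ℕ) (Jo Je : ℝ) : ℝ :=
  (1/2^(2*n)) * ∑ k ∈ Finset.range 5, (Nat.choose 4 k : ℝ) *
    ∑ m ∈ Finset.range 2,
      (Real.cos (2*Jo+2*Je)^(4-k) * Real.sin (2*Jo+2*Je)^k +
        (-1:ℝ)^m * Real.cos (2*Jo-2*Je)^(4-k) * Real.sin (2*Jo-2*Je)^k)^(2*n)

/-- Long-time saturation of the long-range SRE for partition `B₀` at `J_o = J_e = J`:
for `J ∈ (0, π/4)`, `L_{B₀}(T) → 2·log 2` as `T → ∞`. -/
theorem longrange_sre_saturation (J : ℝ) (hJ : J ∈ Set.Ioo (0:ℝ) (Real.pi/4)) :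
    Tendsto (fun T : ℕ =>
        -Real.log ((1 + 2*(f 2 J)^(2*T) + g 2 J J * (f 2 J)^(4*T-8)) / 4))
      atTop (nhds (2 * Real.log 2)) := by
  obtain ⟨hJ0, hJ1⟩ := hJ
  set r := f 2 J with hr
  have hc : 0 < Real.cos (2*J) := Real.cos_pos_of_mem_Ioo
    ⟨by nlinarith [Real.pi_pos], by nlinarith⟩
  have hs : 0 < Real.sin (2*J) := Real.sin_pos_of_pos_of_lt_pi (by linarith)
    (by nlinarith [Real.pi_pos])
  have hpyth := Real.sin_sq_add_cos_sq (2*J)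
  have hr0 : 0 ≤ r := by
    have := hc.le; have := hs.le
    simp only [hr, f]
    positivity
  have hr1 : r < 1 := by
    simp only [hr, f]
    norm_num
    nlinarith [mul_pos (mul_pos hs hs) (mul_pos hc hc), hpyth]
  have habs : |r| < 1 := abs_lt.2 ⟨by linarith, hr1⟩
  have hmono1 : Tendsto (fun T : ℕ => 2*T) atTop atTop :=
    tendsto_atTop_mono (fun n => by simp only [id_eq]; omega) tendsto_id
  have hmono2 : Tendsto (fun T : ℕ => 4*T-8) atTop atTop :=
    tendsto_atTop_mono' _ (by filter_upwards [eventually_ge_atTop 8] with n hn; simp only [id_eq]; omega)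
      tendsto_id
  have h1 : Tendsto (fun T : ℕ => r^(2*T)) atTop (nhds 0) :=
    (tendsto_pow_atTop_nhds_zero_of_abs_lt_one habs).comp hmono1
  have h2 : Tendsto (fun T : ℕ => r^(4*T-8)) atTop (nhds 0) :=
    (tendsto_pow_atTop_nhds_zero_of_abs_lt_one habs).comp hmono2
  have hin : Tendsto (fun T : ℕ => (1 + 2*r^(2*T) + g 2 J J * r^(4*T-8)) / 4)
      atTop (nhds ((1 + 2*(0:ℝ) + g 2 J J * 0)/4)) := by
    exact (((h1.const_mul 2).const_add 1).add (h2.const_mul _)).div_const 4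
  have hval : (1 + 2*(0:ℝ) + g 2 J J * 0)/4 = 1/4 := by ring
  rw [hval] at hin
  have hlog : Tendsto (fun T : ℕ =>
      Real.log ((1 + 2*r^(2*T) + g 2 J J * r^(4*T-8)) / 4)) atTop
      (nhds (Real.log (1/4))) :=
    ((Real.continuousAt_log (by norm_num)).tendsto).comp hin
  have : Real.log (1/4 : ℝ) = -(2 * Real.log 2) := by
    rw [show (1/4 : ℝ) = 2^(-2 : ℤ) by norm_num, Real.log_zpow]
    push_cast; ring
  rw [this] at hlog
  simpa using hlog.neg
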